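/- Let n ≥ 1, let g₁, g₂ ∈ ℂⁿ be linearly independent, and let a₁, a₂, c₁, c₂, P_max > 0. With b₁ = |g₁ᴴĝ₂| and b₂ = |g₁ᴴĝ₂⊥|, define R₁^min = log₂(1 + a₁/(P_max·‖g₁‖² + c₁)) and R₁^ZF2 = log₂(1 + a₁/(P_max·b₂² + c₁)). Then for every real R₁ with R₁^min ≤ R₁ < R₁^ZF2, setting φ = a₁/(2^{R₁} − 1) − c₁ and κ* = (b₁·√φ − b₂·√((b₁² + b₂²)·P_max − φ))/(b₁² + b₂²), the set { R₂^S(Q) : Q ∈ Ω, R₁^S(Q) = R₁ } has greatest element f_max(R₁) = log₂(1 + a₂/((κ*)²·‖g₂‖² + c₂)). (This is the second case of Theorem 2 of the paper, giving the closed form of the upper boundary of the achievable rate region for the two suspicious links.) -/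

import Mathlib

/-!
Write `g₁ = α e₂ + β e` in the orthonormal pair `e₂ = ĝ₂`, `e = ĝ₂⊥`, so that `|α| = b₁`,
`|β| = b₂` and `g₂ = ‖g₂‖ e₂`. Factoring `Q = BᴴB`, put `x = ‖B e₂‖` and `y = ‖B e‖`. Bessel's
inequality applied to the rows of `B` gives `x² + y² ≤ Tr Q ≤ P_max`, and the triangle inequality
gives `√(g₁ᴴQg₁) ≤ b₁ x + b₂ y`. So if link 1 has rate `R₁`, that is `g₁ᴴQg₁ = φ`, then `x ≥ κ*`,
the smallest `x ≥ 0` allowed by these two constraints, and `g₂ᴴQg₂ = ‖g₂‖² x² ≥ κ*² ‖g₂‖²`.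
Equality holds for the rank-one `Q = w wᴴ` with `w = κ* (phase of α) e₂ + √(P_max - κ*²) (phase
of β) e`. The bound on `g₂ᴴQg₂` becomes the claimed bound on the rate because `R₂^S` is antitone.
-/

open Matrix
open scoped ComplexOrder InnerProductSpace
open WithLp (toLp ofLp)

namespace Matrix

variable {m ι : Type*} [Fintype m] [Fintype ι]

lemma PosSemidef.exists_eq_conjTranspose_mul_self {Q : Matrix ι ι ℂ} (hQ : Q.PosSemidef) :
    ∃ B : Matrix ι ι ℂ, Q = Bᴴ * B := by
  classical
  open scoped MatrixOrder Matrix.Norms.L2Operator in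
  exact CStarAlgebra.nonneg_iff_eq_star_mul_self.mp hQ.nonneg

lemma re_trace_conjTranspose_mul_self (B : Matrix m ι ℂ) :
    (Bᴴ * B).trace.re = ∑ j, ∑ i, ‖B j i‖ ^ 2 := by
  simp only [trace, diag, mul_apply, conjTranspose_apply, RCLike.star_def, Complex.conj_mul',
    Complex.re_sum, ← Complex.ofReal_pow, Complex.ofReal_re]
  exact Finset.sum_comm

lemma sum_norm_mulVec_sq_le_re_trace {κ : Type*} [Fintype κ] (B : Matrix m ι ℂ)
    {v : κ → EuclideanSpace ℂ ι} (hv : Orthonormal ℂ v) :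
    ∑ k, ‖toLp 2 (B *ᵥ ofLp (v k))‖ ^ 2 ≤ (Bᴴ * B).trace.re := by
  simp only [re_trace_conjTranspose_mul_self, EuclideanSpace.norm_sq_eq]
  rw [Finset.sum_comm]
  refine Finset.sum_le_sum fun j _ => ?_
  have hrow : ∀ k, (B *ᵥ ofLp (v k)) j = ⟪toLp 2 (star (B j)), v k⟫_ℂ := fun k => by
    rw [EuclideanSpace.inner_eq_star_dotProduct, dotProduct_comm]
    simp [mulVec]
  simpa [hrow, norm_inner_symm, EuclideanSpace.norm_sq_eq] using
    hv.sum_inner_products_le (toLp 2 (star (B j))) (s := Finset.univ)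

end Matrix

namespace Complex

lemma conj_ofReal_div_norm_mul_mul (r : ℝ) (z : ℂ) :
    starRingEnd ℂ (((r / ‖z‖ : ℝ) : ℂ) * z) * z = (‖z‖ * r : ℝ) := by
  rcases eq_or_ne z 0 with rfl | hz
  · simp
  rw [map_mul, conj_ofReal, mul_assoc, conj_mul']
  push_cast
  field_simp

lemma norm_ofReal_div_norm_mul_le {r : ℝ} (hr : 0 ≤ r) (z : ℂ) :
    ‖((r / ‖z‖ : ℝ) : ℂ) * z‖ ≤ r := by
  rcases eq_or_ne z 0 with rfl | hz
  · simpa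
  rw [norm_mul, norm_real, Real.norm_of_nonneg (by positivity),
    div_mul_cancel₀ _ (norm_ne_zero_iff.mpr hz)]

end Complex

section InnerProductSpace

variable {E : Type*} [NormedAddCommGroup E] [InnerProductSpace ℂ E]

lemma Orthonormal.norm_smul_add_smul_sq {u w : E} (huw : Orthonormal ℂ ![u, w]) (α β : ℂ) :
    ‖α • u + β • w‖ ^ 2 = ‖α‖ ^ 2 + ‖β‖ ^ 2 := by
  have hu : ‖u‖ = 1 := huw.1 0
  have hw : ‖w‖ = 1 := huw.1 1
  have h : ⟪u, w⟫_ℂ = 0 := huw.2 (i := 0) (j := 1) (by decide)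
  simp only [sq]
  rw [norm_add_sq_eq_norm_sq_add_norm_sq_of_inner_eq_zero _ _
    (by rw [inner_smul_left, inner_smul_right, h, mul_zero, mul_zero]),
    norm_smul, norm_smul, hu, hw, mul_one, mul_one]

lemma Orthonormal.inner_smul_add_smul {u w : E} (huw : Orthonormal ℂ ![u, w]) (a b α β : ℂ) :
    ⟪a • u + b • w, α • u + β • w⟫_ℂ = starRingEnd ℂ a * α + starRingEnd ℂ b * β := by
  have hu : ⟪u, u⟫_ℂ = 1 := by rw [inner_self_eq_norm_sq_to_K, show ‖u‖ = 1 from huw.1 0]; simp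
  have hw : ⟪w, w⟫_ℂ = 1 := by rw [inner_self_eq_norm_sq_to_K, show ‖w‖ = 1 from huw.1 1]; simp
  have huw' : ⟪u, w⟫_ℂ = 0 := huw.2 (i := 0) (j := 1) (by decide)
  have hwu : ⟪w, u⟫_ℂ = 0 := huw.2 (i := 1) (j := 0) (by decide)
  simp only [inner_add_left, inner_add_right, inner_smul_left, inner_smul_right, hu, hw, huw', hwu]
  ring

lemma gramSchmidt_pair {g₁ g₂ e₂ p e : E} (hli : LinearIndependent ℂ ![g₁, g₂])
    (he₂ : e₂ = (‖g₂‖ : ℂ)⁻¹ • g₂) (hp : p = g₁ - ⟪e₂, g₁⟫_ℂ • e₂)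
    (he : e = (‖p‖ : ℂ)⁻¹ • p) :
    Orthonormal ℂ ![e₂, e] ∧ g₁ = ⟪e₂, g₁⟫_ℂ • e₂ + ⟪e, g₁⟫_ℂ • e ∧ g₂ = (‖g₂‖ : ℂ) • e₂ := by
  have hpair := LinearIndependent.pair_iff.mp hli
  have hg₂ : g₂ ≠ 0 := fun h => one_ne_zero (hpair 0 1 (by simp [h])).2
  set c := ⟪e₂, g₁⟫_ℂ
  have hp0 : p ≠ 0 := by
    intro h
    refine one_ne_zero (hpair 1 (-(c * (‖g₂‖ : ℂ)⁻¹)) ?_).1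
    rw [sub_eq_zero.mp (hp ▸ h : g₁ - c • e₂ = 0), he₂]
    module
  have he₂1 : ‖e₂‖ = 1 := by rw [he₂]; exact norm_smul_inv_norm hg₂
  have he1 : ‖e‖ = 1 := by rw [he]; exact norm_smul_inv_norm hp0
  have he₂p : ⟪e₂, p⟫_ℂ = 0 := by
    rw [hp, inner_sub_right, inner_smul_right, inner_self_eq_norm_sq_to_K, he₂1]
    simp [c]
  have he₂e : ⟪e₂, e⟫_ℂ = 0 := by rw [he, inner_smul_right, he₂p, mul_zero]
  have hdecomp : g₁ = c • e₂ + p := by rw [hp]; abel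
  have hep : ⟪e, g₁⟫_ℂ = ‖p‖ := by
    rw [hdecomp, inner_add_right, inner_smul_right, ← inner_conj_symm, he₂e, map_zero, mul_zero,
      zero_add, he, inner_smul_left, inner_self_eq_norm_sq_to_K]
    simp [sq, hp0]
  refine ⟨by simp [orthonormal_vecCons_iff, he₂1, he1, he₂e], ?_, ?_⟩
  · rw [hep, he, smul_smul, mul_inv_cancel₀ (by exact_mod_cast norm_ne_zero_iff.mpr hp0),
      one_smul]
    exact hdecomp
  · rw [he₂, smul_smul, mul_inv_cancel₀ (by exact_mod_cast norm_ne_zero_iff.mpr hg₂), one_smul]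

end InnerProductSpace

namespace JammingRegion

section Coordinates

variable {ι : Type*} [Fintype ι]

lemma re_star_dotProduct_self (x : ι → ℂ) : (star x ⬝ᵥ x).re = ‖toLp 2 x‖ ^ 2 := by
  rw [← inner_self_eq_norm_sq (𝕜 := ℂ), EuclideanSpace.inner_toLp_toLp, dotProduct_comm]
  rfl

lemma dotProduct_star_eq_inner (x y : ι → ℂ) : star x ⬝ᵥ y = ⟪toLp 2 x, toLp 2 y⟫_ℂ := by
  rw [EuclideanSpace.inner_toLp_toLp, dotProduct_comm]

lemma sqrt_re_star_dotProduct_self (x : ι → ℂ) : √((star x ⬝ᵥ x).re) = ‖toLp 2 x‖ := by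
  rw [re_star_dotProduct_self, Real.sqrt_sq (norm_nonneg _)]

omit [Fintype ι] in
lemma linearIndependent_toLp_pair {x y : ι → ℂ} (h : LinearIndependent ℂ ![x, y]) :
    LinearIndependent ℂ ![toLp 2 x, toLp 2 y] := by
  refine LinearIndependent.pair_iff.mpr fun s t hst => LinearIndependent.pair_iff.mp h s t ?_
  simpa using congrArg ofLp hst

lemma gramSchmidt_pair_toLp {g₁ g₂ e₂ p e : ι → ℂ} (hli : LinearIndependent ℂ ![g₁, g₂])
    (he₂ : e₂ = (√((star g₂ ⬝ᵥ g₂).re))⁻¹ • g₂) (hp : p = g₁ - (star e₂ ⬝ᵥ g₁) • e₂)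
    (he : e = (√((star p ⬝ᵥ p).re))⁻¹ • p) :
    Orthonormal ℂ ![toLp 2 e₂, toLp 2 e] ∧
      toLp 2 g₁ = (star e₂ ⬝ᵥ g₁) • toLp 2 e₂ + (star e ⬝ᵥ g₁) • toLp 2 e ∧
      toLp 2 g₂ = (‖toLp 2 g₂‖ : ℂ) • toLp 2 e₂ := by
  simp only [dotProduct_star_eq_inner]
  refine gramSchmidt_pair (E := EuclideanSpace ℂ ι) (p := toLp 2 p)
    (linearIndependent_toLp_pair hli) ?_ ?_ ?_
  · rw [he₂, sqrt_re_star_dotProduct_self, ← Complex.ofReal_inv, Complex.coe_smul,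
      WithLp.toLp_smul]
  · rw [hp, dotProduct_star_eq_inner, WithLp.toLp_sub, WithLp.toLp_smul]
  · rw [he, sqrt_re_star_dotProduct_self, ← Complex.ofReal_inv, Complex.coe_smul,
      WithLp.toLp_smul]

end Coordinates

section QuadForm

variable {ι : Type*} [Fintype ι]

noncomputable def quadForm (Q : Matrix ι ι ℂ) (v : EuclideanSpace ℂ ι) : ℝ :=
  (star (ofLp v) ⬝ᵥ Q *ᵥ ofLp v).re

lemma quadForm_nonneg {Q : Matrix ι ι ℂ} (hQ : Q.PosSemidef) (v : EuclideanSpace ℂ ι) :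
    0 ≤ quadForm Q v :=
  hQ.re_dotProduct_nonneg _

lemma quadForm_conjTranspose_mul_self {m : Type*} [Fintype m] (B : Matrix m ι ℂ)
    (v : EuclideanSpace ℂ ι) : quadForm (Bᴴ * B) v = ‖toLp 2 (B *ᵥ ofLp v)‖ ^ 2 := by
  rw [quadForm, ← mulVec_mulVec, dotProduct_mulVec, ← star_mulVec, re_star_dotProduct_self]

lemma quadForm_vecMulVec (w v : EuclideanSpace ℂ ι) :
    quadForm (vecMulVec (ofLp w) (star (ofLp w))) v = ‖⟪w, v⟫_ℂ‖ ^ 2 := by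
  rw [quadForm, vecMulVec_mulVec, dotProduct_smul, op_smul_eq_mul,
    EuclideanSpace.inner_eq_star_dotProduct, dotProduct_comm (ofLp v), Matrix.star_dotProduct,
    RCLike.star_def, Complex.conj_mul', ← Complex.ofReal_pow, Complex.ofReal_re]

lemma re_trace_vecMulVec (w : EuclideanSpace ℂ ι) :
    (vecMulVec (ofLp w) (star (ofLp w))).trace.re = ‖w‖ ^ 2 := by
  rw [trace_vecMulVec, dotProduct_comm, re_star_dotProduct_self]

end QuadForm

/-- The paper's `κ*`. -/
noncomputable def kappaStar (b₁ b₂ P φ : ℝ) : ℝ :=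
  (b₁ * √φ - b₂ * √((b₁ ^ 2 + b₂ ^ 2) * P - φ)) / (b₁ ^ 2 + b₂ ^ 2)

section KappaStar

variable {b₁ b₂ P φ : ℝ}

lemma pos_of_sq_mul_lt_of_le (hlt : b₂ ^ 2 * P < φ) (hφP : φ ≤ (b₁ ^ 2 + b₂ ^ 2) * P) :
    0 < φ := by
  have hP : 0 < P :=
    pos_of_mul_pos_right (by linear_combination hφP + hlt : 0 < b₁ ^ 2 * P) (sq_nonneg _)
  exact lt_of_le_of_lt (by positivity) hlt

lemma ne_zero_of_sq_mul_lt_of_le (hlt : b₂ ^ 2 * P < φ) (hφP : φ ≤ (b₁ ^ 2 + b₂ ^ 2) * P) :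
    b₁ ≠ 0 := by
  rintro rfl
  linarith

lemma sub_sq_kappaStar (hb₁ : 0 < b₁) (hφ : 0 ≤ φ) (hφP : φ ≤ (b₁ ^ 2 + b₂ ^ 2) * P) :
    P - kappaStar b₁ b₂ P φ ^ 2 =
      ((b₁ * √((b₁ ^ 2 + b₂ ^ 2) * P - φ) + b₂ * √φ) / (b₁ ^ 2 + b₂ ^ 2)) ^ 2 := by
  have hs := Real.sq_sqrt hφ
  have ht := Real.sq_sqrt (sub_nonneg.mpr hφP)
  rw [kappaStar]
  generalize √φ = s at hs ⊢
  generalize √((b₁ ^ 2 + b₂ ^ 2) * P - φ) = t at ht ⊢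
  field_simp
  linear_combination (-(b₁ ^ 2 + b₂ ^ 2)) * (hs + ht)

lemma sq_kappaStar_le (hb₁ : 0 < b₁) (hφ : 0 ≤ φ) (hφP : φ ≤ (b₁ ^ 2 + b₂ ^ 2) * P) :
    kappaStar b₁ b₂ P φ ^ 2 ≤ P :=
  sub_nonneg.mp ((sub_sq_kappaStar hb₁ hφ hφP).symm ▸ sq_nonneg _)

lemma mul_kappaStar_add_mul_sqrt (hb₁ : 0 < b₁) (hb₂ : 0 ≤ b₂) (hφ : 0 ≤ φ)
    (hφP : φ ≤ (b₁ ^ 2 + b₂ ^ 2) * P) :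
    b₁ * kappaStar b₁ b₂ P φ + b₂ * √(P - kappaStar b₁ b₂ P φ ^ 2) = √φ := by
  have hnum : 0 ≤ b₁ * √((b₁ ^ 2 + b₂ ^ 2) * P - φ) + b₂ * √φ :=
    add_nonneg (mul_nonneg hb₁.le (Real.sqrt_nonneg _)) (mul_nonneg hb₂ (Real.sqrt_nonneg _))
  rw [sub_sq_kappaStar hb₁ hφ hφP, Real.sqrt_sq (div_nonneg hnum (by positivity)), kappaStar]
  field_simp
  ring

lemma kappaStar_pos (hb₁ : 0 < b₁) (hlt : b₂ ^ 2 * P < φ)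
    (hφP : φ ≤ (b₁ ^ 2 + b₂ ^ 2) * P) : 0 < kappaStar b₁ b₂ P φ := by
  have hφ := pos_of_sq_mul_lt_of_le hlt hφP
  have hsq : (b₂ * √((b₁ ^ 2 + b₂ ^ 2) * P - φ)) ^ 2 < (b₁ * √φ) ^ 2 := by
    rw [mul_pow, mul_pow, Real.sq_sqrt (sub_nonneg.mpr hφP), Real.sq_sqrt hφ.le]
    nlinarith [mul_lt_mul_of_pos_left hlt (show 0 < b₁ ^ 2 by positivity)]
  exact div_pos (sub_pos.mpr (lt_of_pow_lt_pow_left₀ 2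
    (mul_nonneg hb₁.le (Real.sqrt_nonneg _)) hsq)) (by positivity)

/-- Eliminating `y`, the constraints say that `x` lies between the roots of
`(b₁² + b₂²) x² - 2 b₁ √φ x + φ - b₂² P`, the smaller of which is `kappaStar`. -/
lemma kappaStar_le (hb₁ : 0 < b₁) (hb₂ : 0 ≤ b₂) (hlt : b₂ ^ 2 * P < φ)
    (hφP : φ ≤ (b₁ ^ 2 + b₂ ^ 2) * P) {x y : ℝ} (hxy : x ^ 2 + y ^ 2 ≤ P)
    (h : √φ ≤ b₁ * x + b₂ * y) : kappaStar b₁ b₂ P φ ≤ x := by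
  have hκ := kappaStar_pos hb₁ hlt hφP
  have hSκ : (b₁ ^ 2 + b₂ ^ 2) * kappaStar b₁ b₂ P φ =
      b₁ * √φ - b₂ * √((b₁ ^ 2 + b₂ ^ 2) * P - φ) := by
    rw [kappaStar]; field_simp
  have hs := Real.sq_sqrt (pos_of_sq_mul_lt_of_le hlt hφP).le
  have ht := Real.sq_sqrt (sub_nonneg.mpr hφP)
  have ht0 := Real.sqrt_nonneg ((b₁ ^ 2 + b₂ ^ 2) * P - φ)
  generalize kappaStar b₁ b₂ P φ = κ at *
  generalize √φ = s at *
  generalize √((b₁ ^ 2 + b₂ ^ 2) * P - φ) = t at *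
  by_contra! hx
  have hb₁κ : b₁ * κ ≤ s := by
    nlinarith [mul_nonneg hb₂ ht0, mul_nonneg (sq_nonneg b₂) hκ.le]
  have hpos : 0 < s - b₁ * x := by nlinarith
  have hquad : (s - b₁ * x) ^ 2 ≤ b₂ ^ 2 * (P - x ^ 2) :=
    calc (s - b₁ * x) ^ 2 ≤ (b₂ * y) ^ 2 := pow_le_pow_left₀ hpos.le (by linarith) 2
      _ = b₂ ^ 2 * y ^ 2 := mul_pow _ _ _
      _ ≤ b₂ ^ 2 * (P - x ^ 2) := by gcongr; linarith
  have hfactor : (b₁ ^ 2 + b₂ ^ 2) * ((x - κ) * ((b₁ ^ 2 + b₂ ^ 2) * x - (b₁ * s + b₂ * t))) =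
      (b₁ ^ 2 + b₂ ^ 2) * ((s - b₁ * x) ^ 2 - b₂ ^ 2 * (P - x ^ 2)) := by
    linear_combination (-((b₁ ^ 2 + b₂ ^ 2) * x - (b₁ * s + b₂ * t))) * hSκ
      - b₂ ^ 2 * hs - b₂ ^ 2 * ht
  have hS : 0 < b₁ ^ 2 + b₂ ^ 2 := by positivity
  have hneg : (b₁ ^ 2 + b₂ ^ 2) * x - (b₁ * s + b₂ * t) < 0 := by
    nlinarith [mul_lt_mul_of_pos_left hx hS, mul_nonneg hb₂ ht0]
  have hlhs := mul_pos hS (mul_pos_of_neg_of_neg (sub_neg.mpr hx) hneg)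
  have hrhs := mul_nonpos_of_nonneg_of_nonpos hS.le (sub_nonpos.mpr hquad)
  linarith

end KappaStar

section Optimum

variable {ι : Type*} [Fintype ι] {u w g₁ g₂ : EuclideanSpace ℂ ι} {α β ν : ℂ} {P φ : ℝ}

lemma sq_kappaStar_mul_le_quadForm (huw : Orthonormal ℂ ![u, w]) (hg₁ : g₁ = α • u + β • w)
    (hg₂ : g₂ = ν • u) (hlt : ‖β‖ ^ 2 * P < φ) (hφP : φ ≤ (‖α‖ ^ 2 + ‖β‖ ^ 2) * P)
    {Q : Matrix ι ι ℂ} (hQ : Q.PosSemidef) (htr : Q.trace.re ≤ P) (hq : quadForm Q g₁ = φ) :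
    kappaStar ‖α‖ ‖β‖ P φ ^ 2 * ‖ν‖ ^ 2 ≤ quadForm Q g₂ := by
  obtain ⟨B, rfl⟩ := hQ.exists_eq_conjTranspose_mul_self
  have hα := (norm_nonneg α).lt_of_ne' (ne_zero_of_sq_mul_lt_of_le hlt hφP)
  have hxy : ‖toLp 2 (B *ᵥ ofLp u)‖ ^ 2 + ‖toLp 2 (B *ᵥ ofLp w)‖ ^ 2 ≤ P := by
    have := sum_norm_mulVec_sq_le_re_trace B huw
    rw [Fin.sum_univ_two] at this
    exact this.trans htr
  have htri : √φ ≤ ‖α‖ * ‖toLp 2 (B *ᵥ ofLp u)‖ + ‖β‖ * ‖toLp 2 (B *ᵥ ofLp w)‖ := by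
    have hB : toLp 2 (B *ᵥ ofLp g₁) = α • toLp 2 (B *ᵥ ofLp u) + β • toLp 2 (B *ᵥ ofLp w) := by
      rw [hg₁]; simp [mulVec_add, mulVec_smul]
    rw [← hq, quadForm_conjTranspose_mul_self, Real.sqrt_sq (norm_nonneg _), hB, ← norm_smul,
      ← norm_smul]
    exact norm_add_le _ _
  have hκ := kappaStar_le hα (norm_nonneg β) hlt hφP hxy htri
  have hBg₂ : ‖toLp 2 (B *ᵥ ofLp g₂)‖ = ‖ν‖ * ‖toLp 2 (B *ᵥ ofLp u)‖ := by
    rw [hg₂, ← norm_smul]; simp [mulVec_smul]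
  rw [quadForm_conjTranspose_mul_self, hBg₂, mul_pow, mul_comm]
  exact mul_le_mul_of_nonneg_left (pow_le_pow_left₀ (kappaStar_pos hα hlt hφP).le hκ 2)
    (sq_nonneg _)

lemma exists_quadForm_eq_sq_kappaStar_mul (huw : Orthonormal ℂ ![u, w])
    (hg₁ : g₁ = α • u + β • w) (hg₂ : g₂ = ν • u) (hlt : ‖β‖ ^ 2 * P < φ)
    (hφP : φ ≤ (‖α‖ ^ 2 + ‖β‖ ^ 2) * P) :
    ∃ Q : Matrix ι ι ℂ, Q.PosSemidef ∧ Q.trace.re ≤ P ∧ quadForm Q g₁ = φ ∧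
      quadForm Q g₂ = kappaStar ‖α‖ ‖β‖ P φ ^ 2 * ‖ν‖ ^ 2 := by
  have hα := (norm_nonneg α).lt_of_ne' (ne_zero_of_sq_mul_lt_of_le hlt hφP)
  have hφ := pos_of_sq_mul_lt_of_le hlt hφP
  set κ := kappaStar ‖α‖ ‖β‖ P φ
  have hκ : 0 < κ := kappaStar_pos hα hlt hφP
  let a : ℂ := ((κ / ‖α‖ : ℝ) : ℂ) * α
  let b : ℂ := ((√(P - κ ^ 2) / ‖β‖ : ℝ) : ℂ) * β
  have ha : ‖a‖ = κ := by
    rw [norm_mul, Complex.norm_real, Real.norm_of_nonneg (by positivity),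
      div_mul_cancel₀ _ hα.ne']
  have hb : ‖b‖ ≤ √(P - κ ^ 2) := Complex.norm_ofReal_div_norm_mul_le (Real.sqrt_nonneg _) β
  have haα : starRingEnd ℂ a * α = (‖α‖ * κ : ℝ) := Complex.conj_ofReal_div_norm_mul_mul κ α
  have hbβ : starRingEnd ℂ b * β = (‖β‖ * √(P - κ ^ 2) : ℝ) :=
    Complex.conj_ofReal_div_norm_mul_mul _ β
  let w₀ := a • u + b • w
  refine ⟨vecMulVec (ofLp w₀) (star (ofLp w₀)), posSemidef_vecMulVec_self_star _, ?_, ?_, ?_⟩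
  · rw [re_trace_vecMulVec, huw.norm_smul_add_smul_sq, ha]
    nlinarith [pow_le_pow_left₀ (norm_nonneg _) hb 2,
      Real.sq_sqrt (sub_nonneg.mpr (sq_kappaStar_le hα hφ.le hφP))]
  · rw [quadForm_vecMulVec, hg₁, huw.inner_smul_add_smul, haα, hbβ, ← Complex.ofReal_add,
      mul_kappaStar_add_mul_sqrt hα (norm_nonneg β) hφ.le hφP, Complex.norm_real,
      Real.norm_of_nonneg (Real.sqrt_nonneg _), Real.sq_sqrt hφ.le]
  · rw [quadForm_vecMulVec, hg₂, ← add_zero (ν • u), ← zero_smul ℂ w,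
      huw.inner_smul_add_smul, mul_zero, add_zero, norm_mul, RCLike.norm_conj, ha, mul_pow]

lemma isLeast_quadForm (huw : Orthonormal ℂ ![u, w]) (hg₁ : g₁ = α • u + β • w)
    (hg₂ : g₂ = ν • u) (hlt : ‖β‖ ^ 2 * P < φ) (hφP : φ ≤ (‖α‖ ^ 2 + ‖β‖ ^ 2) * P) :
    IsLeast {x | ∃ Q : Matrix ι ι ℂ, Q.PosSemidef ∧ Q.trace.re ≤ P ∧ quadForm Q g₁ = φ ∧
      x = quadForm Q g₂} (kappaStar ‖α‖ ‖β‖ P φ ^ 2 * ‖ν‖ ^ 2) := by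
  refine ⟨?_, fun x ⟨Q, hQ, htr, hq, hx⟩ =>
    hx ▸ sq_kappaStar_mul_le_quadForm huw hg₁ hg₂ hlt hφP hQ htr hq⟩
  obtain ⟨Q, hQ, htr, hq₁, hq₂⟩ := exists_quadForm_eq_sq_kappaStar_mul huw hg₁ hg₂ hlt hφP
  exact ⟨Q, hQ, htr, hq₁, hq₂.symm⟩

end Optimum

section Rate

open Set

/-- The paper's `Rᵢ^S`, as a function of the jamming power `gᵢᴴQgᵢ` at receiver `i`. -/
noncomputable def suspiciousRate (a c t : ℝ) : ℝ := Real.logb 2 (1 + a / (t + c))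

/-- The paper's `φ(R)`. -/
noncomputable def jammingPower (a c R : ℝ) : ℝ := a / (2 ^ R - 1) - c

variable {a c : ℝ}

lemma suspiciousRate_pos (ha : 0 < a) {t : ℝ} (ht : 0 < t + c) : 0 < suspiciousRate a c t :=
  Real.logb_pos one_lt_two (lt_add_of_pos_right 1 (div_pos ha ht))

lemma suspiciousRate_strictAntiOn (ha : 0 < a) :
    StrictAntiOn (suspiciousRate a c) (Ioi (-c)) := by
  intro s hs t ht hst
  have hs : 0 < s + c := neg_lt_iff_pos_add.mp hs
  have ht : 0 < t + c := neg_lt_iff_pos_add.mp ht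
  refine Real.logb_lt_logb one_lt_two (by positivity) ?_
  gcongr

lemma suspiciousRate_eq_iff (ha : 0 < a) {t R : ℝ} (ht : 0 < t + c) :
    suspiciousRate a c t = R ↔ t = jammingPower a c R := by
  rw [suspiciousRate, jammingPower, Real.logb_eq_iff_rpow_eq two_pos (by norm_num) (by positivity),
    eq_sub_iff_add_eq, ← sub_eq_iff_eq_add']
  constructor <;> intro h <;> rw [h, div_div_cancel₀ ha.ne']

lemma jammingPower_mem_Ioc (ha : 0 < a) {R lo hi : ℝ} (hlo : 0 < lo + c) (hhi : 0 < hi + c)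
    (hR_ge : suspiciousRate a c hi ≤ R) (hR_lt : R < suspiciousRate a c lo) :
    jammingPower a c R ∈ Ioc lo hi := by
  have hR : 0 < R := (suspiciousRate_pos ha hhi).trans_le hR_ge
  have hφ : 0 < jammingPower a c R + c := by
    rw [jammingPower, sub_add_cancel]
    exact div_pos ha (sub_pos.mpr (Real.one_lt_rpow one_lt_two hR))
  have hanti := suspiciousRate_strictAntiOn (c := c) ha
  have mem : ∀ {t}, 0 < t + c → t ∈ Ioi (-c) := neg_lt_iff_pos_add.mpr
  rw [← (suspiciousRate_eq_iff ha hφ).mpr rfl] at hR_ge hR_lt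
  exact ⟨(hanti.lt_iff_gt (mem hφ) (mem hlo)).mp hR_lt,
    (hanti.le_iff_ge (mem hhi) (mem hφ)).mp hR_ge⟩

lemma isGreatest_suspiciousRate {ι : Type*} [Fintype ι] {g₁ g₂ : EuclideanSpace ℂ ι}
    {a₂ c₂ P R m : ℝ} (ha : 0 < a) (hc : 0 < c) (ha₂ : 0 < a₂) (hc₂ : 0 < c₂)
    (h : IsLeast {x | ∃ Q : Matrix ι ι ℂ, Q.PosSemidef ∧ Q.trace.re ≤ P ∧
      quadForm Q g₁ = jammingPower a c R ∧ x = quadForm Q g₂} m) :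
    IsGreatest {r | ∃ Q : Matrix ι ι ℂ, Q.PosSemidef ∧ Q.trace.re ≤ P ∧
      suspiciousRate a c (quadForm Q g₁) = R ∧ r = suspiciousRate a₂ c₂ (quadForm Q g₂)}
      (suspiciousRate a₂ c₂ m) := by
  have hrate : ∀ {Q : Matrix ι ι ℂ}, Q.PosSemidef →
      (suspiciousRate a c (quadForm Q g₁) = R ↔ quadForm Q g₁ = jammingPower a c R) :=
    fun hQ => suspiciousRate_eq_iff ha (by linarith [quadForm_nonneg hQ g₁])
  have himage : {r | ∃ Q : Matrix ι ι ℂ, Q.PosSemidef ∧ Q.trace.re ≤ P ∧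
      suspiciousRate a c (quadForm Q g₁) = R ∧ r = suspiciousRate a₂ c₂ (quadForm Q g₂)} =
      suspiciousRate a₂ c₂ '' {x | ∃ Q : Matrix ι ι ℂ, Q.PosSemidef ∧ Q.trace.re ≤ P ∧
        quadForm Q g₁ = jammingPower a c R ∧ x = quadForm Q g₂} := by
    ext r
    constructor
    · rintro ⟨Q, hQ, htr, hR, rfl⟩
      exact ⟨_, ⟨Q, hQ, htr, (hrate hQ).mp hR, rfl⟩, rfl⟩
    · rintro ⟨_, ⟨Q, hQ, htr, hq, rfl⟩, rfl⟩
      exact ⟨Q, hQ, htr, (hrate hQ).mpr hq, rfl⟩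
  rw [himage]
  refine ((suspiciousRate_strictAntiOn ha₂).antitoneOn.mono ?_).map_isLeast h
  rintro _ ⟨Q, hQ, -, -, rfl⟩
  exact (neg_neg_of_pos hc₂).trans_le (quadForm_nonneg hQ g₂)

end Rate

end JammingRegion

open JammingRegion

theorem stmt7_general (n : ℕ) (g₁ g₂ : Fin n → ℂ)
    (hli : LinearIndependent ℂ ![g₁, g₂])
    (a₁ a₂ c₁ c₂ Pmax : ℝ)
    (ha₁ : 0 < a₁) (ha₂ : 0 < a₂) (hc₁ : 0 < c₁) (hc₂ : 0 < c₂) (hPmax : 0 < Pmax)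
    (gh2 gperp ghperp : Fin n → ℂ)
    (hgh2 : gh2 = (Real.sqrt ((star g₂ ⬝ᵥ g₂).re))⁻¹ • g₂)
    (hgperp : gperp = g₁ - (star gh2 ⬝ᵥ g₁) • gh2)
    (hghperp : ghperp = (Real.sqrt ((star gperp ⬝ᵥ gperp).re))⁻¹ • gperp)
    (b₁ b₂ : ℝ)
    (hb₁ : b₁ = ‖star g₁ ⬝ᵥ gh2‖)
    (hb₂ : b₂ = ‖star g₁ ⬝ᵥ ghperp‖)
    (R₁ : ℝ)
    (hR₁l : Real.logb 2 (1 + a₁ / (Pmax * (star g₁ ⬝ᵥ g₁).re + c₁)) ≤ R₁)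
    (hR₁u : R₁ < Real.logb 2 (1 + a₁ / (Pmax * b₂ ^ 2 + c₁)))
    (φ : ℝ) (hφ : φ = a₁ / ((2 : ℝ) ^ R₁ - 1) - c₁)
    (κ : ℝ) (hκ : κ = (b₁ * Real.sqrt φ -
      b₂ * Real.sqrt ((b₁ ^ 2 + b₂ ^ 2) * Pmax - φ)) / (b₁ ^ 2 + b₂ ^ 2)) :
    IsGreatest
      {r : ℝ | ∃ Q : Matrix (Fin n) (Fin n) ℂ, Q.PosSemidef ∧ Q.trace.re ≤ Pmax ∧
        Real.logb 2 (1 + a₁ / ((star g₁ ⬝ᵥ Q.mulVec g₁).re + c₁)) = R₁ ∧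
        r = Real.logb 2 (1 + a₂ / ((star g₂ ⬝ᵥ Q.mulVec g₂).re + c₂))}
      (Real.logb 2 (1 + a₂ / (κ ^ 2 * (star g₂ ⬝ᵥ g₂).re + c₂))) := by
  obtain ⟨hON, hg₁, hg₂⟩ := gramSchmidt_pair_toLp hli hgh2 hgperp hghperp
  rw [dotProduct_star_eq_inner, norm_inner_symm, ← dotProduct_star_eq_inner] at hb₁ hb₂
  have hnorm : (star g₁ ⬝ᵥ g₁).re = b₁ ^ 2 + b₂ ^ 2 := by
    rw [re_star_dotProduct_self, hg₁, hON.norm_smul_add_smul_sq, hb₁, hb₂]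
  subst hφ hκ hb₁ hb₂
  obtain ⟨hlt, hle⟩ := jammingPower_mem_Ioc ha₁ (by positivity)
    (by rw [re_star_dotProduct_self]; positivity) hR₁l hR₁u
  rw [re_star_dotProduct_self g₂, ← norm_norm (toLp 2 g₂), ← Complex.norm_real]
  -- the sets and rates of the statement are `quadForm` and `suspiciousRate` unfolded
  refine isGreatest_suspiciousRate ha₁ hc₁ ha₂ hc₂ (isLeast_quadForm hON hg₁ hg₂ ?_ ?_)
  · linarith
  · rw [hnorm] at hle
    linarith

/-- Second case of Theorem 2 of the paper: for R₁ between R₁^min and the zero-forcing rate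
R₁^ZF2, the greatest achievable rate of suspicious link 2 given R₁^S(Q) = R₁ is
log₂(1 + a₂/((κ*)²·‖g₂‖² + c₂)). -/
theorem stmt7 (n : ℕ) (hn : 1 ≤ n) (g₁ g₂ : Fin n → ℂ)
    (hli : LinearIndependent ℂ ![g₁, g₂])
    (a₁ a₂ c₁ c₂ Pmax : ℝ)
    (ha₁ : 0 < a₁) (ha₂ : 0 < a₂) (hc₁ : 0 < c₁) (hc₂ : 0 < c₂) (hPmax : 0 < Pmax)
    (gh2 gperp ghperp : Fin n → ℂ)
    (hgh2 : gh2 = (Real.sqrt ((star g₂ ⬝ᵥ g₂).re))⁻¹ • g₂)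
    (hgperp : gperp = g₁ - (star gh2 ⬝ᵥ g₁) • gh2)
    (hghperp : ghperp = (Real.sqrt ((star gperp ⬝ᵥ gperp).re))⁻¹ • gperp)
    (b₁ b₂ : ℝ)
    (hb₁ : b₁ = ‖star g₁ ⬝ᵥ gh2‖)
    (hb₂ : b₂ = ‖star g₁ ⬝ᵥ ghperp‖)
    (R₁ : ℝ)
    (hR₁l : Real.logb 2 (1 + a₁ / (Pmax * (star g₁ ⬝ᵥ g₁).re + c₁)) ≤ R₁)
    (hR₁u : R₁ < Real.logb 2 (1 + a₁ / (Pmax * b₂ ^ 2 + c₁)))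
    (φ : ℝ) (hφ : φ = a₁ / ((2 : ℝ) ^ R₁ - 1) - c₁)
    (κ : ℝ) (hκ : κ = (b₁ * Real.sqrt φ -
      b₂ * Real.sqrt ((b₁ ^ 2 + b₂ ^ 2) * Pmax - φ)) / (b₁ ^ 2 + b₂ ^ 2)) :
    IsGreatest
      {r : ℝ | ∃ Q : Matrix (Fin n) (Fin n) ℂ, Q.PosSemidef ∧ Q.trace.re ≤ Pmax ∧
        Real.logb 2 (1 + a₁ / ((star g₁ ⬝ᵥ Q.mulVec g₁).re + c₁)) = R₁ ∧
        r = Real.logb 2 (1 + a₂ / ((star g₂ ⬝ᵥ Q.mulVec g₂).re + c₂))}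
      (Real.logb 2 (1 + a₂ / (κ ^ 2 * (star g₂ ⬝ᵥ g₂).re + c₂))) :=
  stmt7_general n g₁ g₂ hli a₁ a₂ c₁ c₂ Pmax ha₁ ha₂ hc₁ hc₂ hPmax gh2 gperp ghperp hgh2 hgperp
    hghperp b₁ b₂ hb₁ hb₂ R₁ hR₁l hR₁u φ hφ κ hκ
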